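/- arXiv:1404.0590 — 3 statements merged into one kernel-verified Lean document; each statement's English description precedes it below -/
import Mathlib

section
/- If f : X → X is (m,n)-expansive then f is (m+1,n)-expansive, and if f is (m,n)-expansive with m > n ≥ 2 then f is (m-1,n-1)-expansive. -/
variable {X : Type*} [MetricSpace X]

/-- The `k`-th iterate (`k ∈ ℤ`) of a homeomorphism, as a function. -/
noncomputable def hiter (f : X ≃ₜ X) (k : ℤ) : X → X := ⇑(f.toEquiv ^ k)

/-- A set is `δ`-separated if distinct points are at distance `> δ`. -/
def IsSeparated' (δ : ℝ) (B : Set X) : Prop :=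
  ∀ x ∈ B, ∀ y ∈ B, x ≠ y → δ < dist x y

/-- The `δ`-cardinality of a set: sup of cardinalities of `δ`-separated subsets. -/
noncomputable def dCard (δ : ℝ) (A : Set X) : ℕ∞ :=
  ⨆ B ∈ {B : Set X | B ⊆ A ∧ IsSeparated' δ B}, B.encard

/-- `(m,n)`-expansiveness with a given expansive constant `δ`. -/
def MNExpansiveWith (f : X ≃ₜ X) (m n : ℕ) (δ : ℝ) : Prop :=
  ∀ A : Set X, A.encard = m → ∃ k : ℤ, (n : ℕ∞) < dCard δ (hiter f k '' A)

/-- `(m,n)`-expansiveness. -/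
def MNExpansive (f : X ≃ₜ X) (m n : ℕ) : Prop :=
  ∃ δ > 0, MNExpansiveWith f m n δ

/-! Enlarging `A` only enlarges its images, which gives the first implication. For the second,
extend an `(m-1)`-set `A` by a point `p ∉ A`: some `f^k` maps `A ∪ {p}` onto a set of
`δ`-cardinality `> n`, and dropping `f^k p` costs at most one. Such `p` exists unless `X` has
exactly `m - 1` points; then `X` is finite and any `δ` below the minimal distance works. -/

lemma IsSeparated'.mono {δ : ℝ} {B C : Set X} (hB : IsSeparated' δ B) (hCB : C ⊆ B) :
    IsSeparated' δ C :=
  fun x hx y hy => hB x (hCB hx) y (hCB hy)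

lemma le_dCard {δ : ℝ} {A B : Set X} (hBA : B ⊆ A) (hB : IsSeparated' δ B) :
    B.encard ≤ dCard δ A :=
  le_iSup₂_of_le (f := fun B (_ : B ∈ {B : Set X | B ⊆ A ∧ IsSeparated' δ B}) => B.encard)
    B ⟨hBA, hB⟩ le_rfl

lemma dCard_mono {δ : ℝ} {A A' : Set X} (h : A ⊆ A') : dCard δ A ≤ dCard δ A' :=
  iSup₂_le fun _ ⟨hBA, hB⟩ => le_dCard (hBA.trans h) hB

lemma dCard_insert_le (δ : ℝ) (p : X) (A : Set X) :
    dCard δ (insert p A) ≤ dCard δ A + 1 := by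
  refine iSup₂_le fun B ⟨hBA, hB⟩ => ?_
  calc B.encard ≤ (B \ {p}).encard + 1 := by
        simpa using Set.encard_le_encard_sdiff_add_encard B {p}
    _ ≤ dCard δ A + 1 := by
        gcongr
        exact le_dCard (Set.sdiff_singleton_subset_iff.2 hBA) (hB.mono Set.sdiff_subset)

lemma exists_pos_forall_lt_dist [Finite X] : ∃ ε > 0, ∀ x y : X, x ≠ y → ε < dist x y := by
  have := Fintype.ofFinite X
  rcases (Finset.univ.offDiag : Finset (X × X)).eq_empty_or_nonempty with h | h
  · refine ⟨1, one_pos, fun x y hxy => absurd h ?_⟩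
    exact Finset.nonempty_iff_ne_empty.1 ⟨(x, y), by simp [hxy]⟩
  · obtain ⟨p, hp, hmin⟩ := Finset.exists_min_image _ (fun p : X × X => dist p.1 p.2) h
    have hpos : 0 < dist p.1 p.2 := dist_pos.2 (Finset.mem_offDiag.1 hp).2.2
    exact ⟨dist p.1 p.2 / 2, half_pos hpos, fun x y hxy =>
      (half_lt_self hpos).trans_le (hmin (x, y) (by simp [hxy]))⟩

lemma mnExpansive_of_finite [Finite X] (f : X ≃ₜ X) {m n : ℕ} (hnm : n < m) :
    MNExpansive f m n := by
  obtain ⟨ε, hε, hsep⟩ := exists_pos_forall_lt_dist (X := X)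
  refine ⟨ε, hε, fun A hA => ⟨0, ?_⟩⟩
  calc (n : ℕ∞) < A.encard := by rw [hA]; exact_mod_cast hnm
    _ = (hiter f 0 '' A).encard := ((f.toEquiv ^ (0 : ℤ)).injective.encard_image A).symm
    _ ≤ _ := le_dCard subset_rfl fun x _ y _ hxy => hsep x y hxy

lemma MNExpansiveWith.mono_left {f : X ≃ₜ X} {m m' n : ℕ} {δ : ℝ}
    (h : MNExpansiveWith f m n δ) (hm : m ≤ m') : MNExpansiveWith f m' n δ := by
  intro A hA
  obtain ⟨A', hA'A, hA'⟩ := Set.exists_subset_encard_eq (hA ▸ (Nat.cast_le.2 hm : (m : ℕ∞) ≤ m'))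
  obtain ⟨k, hk⟩ := h A' hA'
  exact ⟨k, hk.trans_le (dCard_mono (Set.image_mono hA'A))⟩

lemma MNExpansiveWith.of_succ_succ {f : X ≃ₜ X} {m n : ℕ} {δ : ℝ}
    (h : MNExpansiveWith f (m + 1) (n + 1) δ) (hX : (Set.univ : Set X).encard ≠ m) :
    MNExpansiveWith f m n δ := by
  intro A hA
  obtain ⟨p, hp⟩ : ∃ p, p ∉ A := by
    by_contra! hA_univ
    exact hX (Set.eq_univ_of_forall hA_univ ▸ hA)
  obtain ⟨k, hk⟩ := h (insert p A) (by rw [Set.encard_insert_of_notMem hp, hA]; push_cast; rfl)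
  rw [Set.image_insert_eq, Nat.cast_succ] at hk
  exact ⟨k, (ENat.add_lt_add_iff_right ENat.one_ne_top).1 (hk.trans_le (dCard_insert_le δ _ _))⟩

theorem stmt3_general (f : X ≃ₜ X) (m n : ℕ) :
    (MNExpansive f m n → MNExpansive f (m + 1) n) ∧
    (n < m → 2 ≤ n → MNExpansive f m n → MNExpansive f (m - 1) (n - 1)) := by
  refine ⟨fun ⟨δ, hδ, h⟩ => ⟨δ, hδ, h.mono_left m.le_succ⟩, fun hnm hn ⟨δ, hδ, h⟩ => ?_⟩
  by_cases hX : (Set.univ : Set X).encard = (m - 1 : ℕ)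
  · have : Finite X := Set.finite_univ_iff.1 (Set.finite_of_encard_eq_coe hX)
    exact mnExpansive_of_finite f (by omega)
  · obtain ⟨m, rfl⟩ : ∃ k, m = k + 1 := ⟨m - 1, by omega⟩
    obtain ⟨n, rfl⟩ : ∃ k, n = k + 1 := ⟨n - 1, by omega⟩
    exact ⟨δ, hδ, h.of_succ_succ hX⟩

theorem stmt3 [CompactSpace X] (f : X ≃ₜ X) (m n : ℕ) :
    (MNExpansive f m n → MNExpansive f (m + 1) n) ∧
    (n < m → 2 ≤ n → MNExpansive f m n → MNExpansive f (m - 1) (n - 1)) :=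
  stmt3_general f m n
end

section
/- If a, n ≥ 2 and f : X → X is an (an, n)-expansive homeomorphism of a compact metric space, then f is (a,1)-expansive. -/
variable {X : Type*} [MetricSpace X]

/-!
If `f` is not `(a,1)`-expansive, then at every scale `ε` some `a`-point set `A` has an `f`-orbit
that stays `ε`-small. If no point of `A` has a period below `L = n a²`, each translate `fʲ A`
(`j < L`) meets at most `a²` of them, so `n` of them are pairwise disjoint; their union has
`a n` points and is covered at all times by `n` sets of diameter `≤ ε`, contradicting
`(a n, n)`-expansiveness. So each such `A` contains a point fixed by `f^(L!)`. By compactness these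
points accumulate at an `f^(L!)`-fixed point `x`, and for such periodic orbits closeness during `L!`
steps is closeness forever. Hence infinitely many of the sets `A` lie in a single set whose orbit
stays `δ`-small; it is infinite because their diameters shrink, which contradicts
`(a n, n)`-expansiveness once more.
-/

open Function Filter Topology Finset

lemma hiter_natCast (f : X ≃ₜ X) (j : ℕ) : hiter f (j : ℤ) = (⇑f)^[j] := by
  rw [hiter, zpow_natCast, Equiv.Perm.coe_pow, Homeomorph.coe_toEquiv]

@[simp]
lemma hiter_zero (f : X ≃ₜ X) : hiter f 0 = id := by
  simp [hiter]

lemma hiter_add (f : X ≃ₜ X) (k t : ℤ) (x : X) :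
    hiter f (k + t) x = hiter f k (hiter f t x) := by
  rw [hiter, zpow_add]
  rfl

lemma hiter_eq_iterate_emod (f : X ≃ₜ X) {Q : ℕ} (hQ : 0 < Q) {x : X}
    (hx : IsPeriodicPt f Q x) (k : ℤ) : hiter f k x = (⇑f)^[(k % Q).toNat] x := by
  have hQx : hiter f (Q * (k / Q)) x = x := by
    have hfix : hiter f Q x = x := by rwa [hiter_natCast]
    rw [hiter, zpow_mul]
    exact Equiv.Perm.zpow_apply_eq_self_of_apply_eq_self hfix _
  calc hiter f k x = hiter f (k % Q + Q * (k / Q)) x := by rw [Int.emod_add_mul_ediv]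
    _ = hiter f (k % Q) x := by rw [hiter_add, hQx]
    _ = (⇑f)^[(k % Q).toNat] x := by
      rw [← hiter_natCast, Int.toNat_of_nonneg (Int.emod_nonneg k (by omega))]

lemma Function.IsPeriodicPt.of_iterate_eq {α : Type*} {F : α → α} (hF : Injective F) {x : α}
    {i j : ℕ} (hij : i ≤ j) (h : F^[i] x = F^[j] x) : IsPeriodicPt F (j - i) x := by
  refine (hF.iterate i) ?_
  rw [← iterate_add_apply, Nat.add_sub_cancel' hij, h]

def DynClique (f : X ≃ₜ X) (ε : ℝ) (C : Set X) : Prop :=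
  ∀ x ∈ C, ∀ y ∈ C, ∀ k : ℤ, dist (hiter f k x) (hiter f k y) ≤ ε

namespace DynClique

variable {f : X ≃ₜ X} {ε : ℝ} {C : Set X}

lemma mono (h : DynClique f ε C) {ε' : ℝ} (hε : ε ≤ ε') : DynClique f ε' C :=
  fun x hx y hy k => (h x hx y hy k).trans hε

lemma image (h : DynClique f ε C) (t : ℤ) : DynClique f ε (hiter f t '' C) := by
  rintro _ ⟨x, hx, rfl⟩ _ ⟨y, hy, rfl⟩ k
  rw [← hiter_add, ← hiter_add]
  exact h x hx y hy _

lemma of_forall_dist_le {x : X} {r : ℝ} (h : ∀ y ∈ C, ∀ k, dist (hiter f k y) (hiter f k x) ≤ r) :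
    DynClique f (2 * r) C := fun y hy z hz k =>
  calc dist (hiter f k y) (hiter f k z)
      ≤ dist (hiter f k y) (hiter f k x) + dist (hiter f k z) (hiter f k x) :=
        dist_triangle_right _ _ _
    _ ≤ 2 * r := by linarith [h y hy k, h z hz k]

end DynClique

lemma dist_le_of_dCard_le_one {δ : ℝ} (hδ : 0 ≤ δ) {s : Set X} (h : dCard δ s ≤ 1) {x y : X}
    (hx : x ∈ s) (hy : y ∈ s) : dist x y ≤ δ := by
  by_contra! hlt
  have hxy : x ≠ y := dist_pos.1 (hδ.trans_lt hlt)
  have hsep : IsSeparated' δ {x, y} := by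
    rintro u (rfl | rfl) v (rfl | rfl) huv
    · exact absurd rfl huv
    · exact hlt
    · rwa [dist_comm]
    · exact absurd rfl huv
  have h2 : (2 : ℕ∞) ≤ dCard δ s := by
    rw [← Set.encard_pair hxy]
    exact le_iSup₂_of_le (f := fun B (_ : B ∈ {B | B ⊆ s ∧ IsSeparated' δ B}) => B.encard)
      {x, y} ⟨Set.pair_subset hx hy, hsep⟩ le_rfl
  exact absurd (h2.trans h) (by norm_num)

lemma dCard_le_card_of_subset_biUnion {δ : ℝ} {ι : Type*} (I : Finset ι) {C : ι → Set X}
    (hC : ∀ i ∈ I, ∀ x ∈ C i, ∀ y ∈ C i, dist x y ≤ δ) {s : Set X} (hs : s ⊆ ⋃ i ∈ I, C i) :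
    dCard δ s ≤ #I := by
  refine iSup₂_le fun S ⟨hSs, hsep⟩ => ?_
  have hcover : ∀ x ∈ S, ∃ i ∈ I, x ∈ C i := fun x hx => by simpa using hs (hSs hx)
  rcases S.eq_empty_or_nonempty with rfl | ⟨x₀, hx₀⟩
  · simp
  obtain ⟨i₀, -⟩ := hcover x₀ hx₀
  have : Nonempty ι := ⟨i₀⟩
  choose! g hgI hgC using hcover
  have hinj : Set.InjOn g S := fun x hx y hy hxy => by
    by_contra hne
    exact (hsep x hx y hy hne).not_ge (hC _ (hgI x hx) x (hgC x hx) y (hxy ▸ hgC y hy))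
  simpa using Set.encard_le_encard_of_injOn (t := I) (fun x hx => hgI x hx) hinj

lemma MNExpansiveWith.lt_card_of_subset_biUnion {f : X ≃ₜ X} {m n : ℕ} {δ : ℝ}
    (hf : MNExpansiveWith f m n δ) {ι : Type*} (I : Finset ι) {C : ι → Set X}
    (hC : ∀ i ∈ I, DynClique f δ (C i)) {B : Set X} (hB : B.encard = m)
    (hBC : B ⊆ ⋃ i ∈ I, C i) : n < #I := by
  obtain ⟨k, hk⟩ := hf B hB
  have hcover : hiter f k '' B ⊆ ⋃ i ∈ I, hiter f k '' C i := by
    rw [← Set.image_iUnion₂]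
    exact Set.image_mono hBC
  have hdiam : ∀ i ∈ I, ∀ x ∈ hiter f k '' C i, ∀ y ∈ hiter f k '' C i, dist x y ≤ δ :=
    fun i hi x hx y hy => by simpa using (hC i hi).image k x hx y hy 0
  exact_mod_cast hk.trans_le (dCard_le_card_of_subset_biUnion I hdiam hcover)

lemma MNExpansiveWith.finite_of_dynClique {f : X ≃ₜ X} {m n : ℕ} {δ : ℝ}
    (hf : MNExpansiveWith f m n δ) (hn : 1 ≤ n) {U : Set X} (hU : DynClique f δ U) : U.Finite := by
  by_contra hUinf
  obtain ⟨B, hBU, hB⟩ := Set.exists_subset_encard_eq (k := m)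
    (by rw [Set.Infinite.encard_eq hUinf]; exact le_top)
  have := hf.lt_card_of_subset_biUnion {()} (fun _ _ => hU) hB
    fun x hx => Set.mem_biUnion (mem_singleton_self ()) (hBU hx)
  rw [card_singleton] at this
  omega

lemma exists_dynClique_of_not_mnExpansive {f : X ≃ₜ X} {a : ℕ} (hf : ¬ MNExpansive f a 1)
    {ε : ℝ} (hε : 0 < ε) : ∃ A : Finset X, #A = a ∧ DynClique f ε A := by
  simp only [MNExpansive, MNExpansiveWith] at hf
  push Not at hf
  obtain ⟨A, hA, hAε⟩ := hf ε hε
  obtain ⟨A, rfl⟩ := (Set.finite_of_encard_eq_coe hA).exists_finset_coe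
  refine ⟨A, by exact_mod_cast hA, fun x hx y hy k => ?_⟩
  exact dist_le_of_dCard_le_one hε.le (by exact_mod_cast hAε k) (Set.mem_image_of_mem _ hx)
    (Set.mem_image_of_mem _ hy)

section Combinatorics

variable {α : Type*}

lemma Finset.exists_subset_card_eq_pairwise [DecidableEq α] {r : α → α → Prop} [DecidableRel r]
    (hsymm : ∀ a b, r a b → r b a) (hirrefl : ∀ a, ¬ r a a) (s : Finset α) {c : ℕ} (hc₀ : 0 < c)
    (hc : ∀ b, #{a ∈ s | ¬ r a b} ≤ c) {n : ℕ} (hn : n * c ≤ #s) :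
    ∃ G ⊆ s, #G = n ∧ (G : Set α).Pairwise r := by
  induction n with
  | zero => exact ⟨∅, empty_subset s, rfl, by simp⟩
  | succ n ih =>
    obtain ⟨G, hGs, hG, hGr⟩ := ih (le_trans (by gcongr; omega) hn)
    set forbidden := G.biUnion fun b => {a ∈ s | ¬ r a b}
    have hforbidden : #forbidden < #s := calc
      #forbidden ≤ #G * c := card_biUnion_le_card_mul _ _ _ fun b _ => hc b
      _ < (n + 1) * c := by rw [hG]; nlinarith
      _ ≤ #s := hn
    obtain ⟨a, has, haf⟩ := exists_mem_notMem_of_card_lt_card hforbidden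
    have hra : ∀ b ∈ G, r a b := fun b hb => by
      by_contra h
      exact haf (mem_biUnion.2 ⟨b, hb, mem_filter.2 ⟨has, h⟩⟩)
    have haG : a ∉ G := fun ha => hirrefl a (hra a ha)
    refine ⟨insert a G, insert_subset has hGs, by rw [card_insert_of_notMem haG, hG], ?_⟩
    rw [coe_insert, Set.pairwise_insert]
    exact ⟨hGr, fun b hb _ => ⟨hra b hb, hsymm _ _ (hra b hb)⟩⟩

variable [DecidableEq α] {F : α → α}

lemma card_filter_not_disjoint_image_iterate_le (hF : Injective F) (A : Finset α) {L : ℕ}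
    (hA : ∀ y ∈ A, ∀ p, 0 < p → p < L → ¬ IsPeriodicPt F p y) (g : ℕ) :
    #{j ∈ range L | ¬ Disjoint (A.image F^[j]) (A.image F^[g])} ≤ #A ^ 2 := by
  have hsub : {j ∈ range L | ¬ Disjoint (A.image F^[j]) (A.image F^[g])} ⊆
      (A ×ˢ A).biUnion fun yz => {j ∈ range L | F^[j] yz.1 = F^[g] yz.2} := by
    intro j hj
    obtain ⟨hjL, hj⟩ := mem_filter.1 hj
    obtain ⟨_, hy, hz⟩ := not_disjoint_iff.1 hj
    obtain ⟨y, hyA, rfl⟩ := mem_image.1 hy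
    obtain ⟨z, hzA, hz⟩ := mem_image.1 hz
    exact mem_biUnion.2 ⟨(y, z), mem_product.2 ⟨hyA, hzA⟩, mem_filter.2 ⟨hjL, hz.symm⟩⟩
  have hhits : ∀ yz ∈ A ×ˢ A, #{j ∈ range L | F^[j] yz.1 = F^[g] yz.2} ≤ 1 := by
    intro yz hyz
    refine card_le_one.2 fun i hi j hj => ?_
    simp only [mem_filter, mem_range] at hi hj
    have hyA := (mem_product.1 hyz).1
    by_contra hij
    rcases Nat.lt_or_gt_of_ne hij with hij | hij
    · exact hA _ hyA (j - i) (by omega) (by omega) (.of_iterate_eq hF hij.le (hi.2.trans hj.2.symm))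
    · exact hA _ hyA (i - j) (by omega) (by omega) (.of_iterate_eq hF hij.le (hj.2.trans hi.2.symm))
  calc _ ≤ #(A ×ˢ A) * 1 := (card_le_card hsub).trans (card_biUnion_le_card_mul _ _ _ hhits)
    _ = #A ^ 2 := by rw [card_product, mul_one, sq]

lemma exists_pairwiseDisjoint_image_iterate (hF : Injective F) {A : Finset α} (hA : A.Nonempty)
    (n : ℕ) (hAper : ∀ y ∈ A, ∀ p, 0 < p → p < n * #A ^ 2 → ¬ IsPeriodicPt F p y) :
    ∃ G : Finset ℕ, #G = n ∧ (G : Set ℕ).PairwiseDisjoint fun j => A.image F^[j] := by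
  obtain ⟨G, -, hG, hGdisj⟩ := exists_subset_card_eq_pairwise
    (r := fun i j => Disjoint (A.image F^[i]) (A.image F^[j])) (fun _ _ h => h.symm)
    (fun i h => (hA.image _).ne_empty (disjoint_self.1 h)) (range (n * #A ^ 2))
    (by positivity) (card_filter_not_disjoint_image_iterate_le hF A hAper) (n := n) (by simp)
  exact ⟨G, hG, hGdisj⟩

end Combinatorics

lemma MNExpansiveWith.exists_isPeriodicPt_of_dynClique {f : X ≃ₜ X} {n : ℕ} {δ : ℝ}
    {A : Finset X} (hf : MNExpansiveWith f (#A * n) n δ) (hA : A.Nonempty)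
    (hAδ : DynClique f δ A) : ∃ y ∈ A, IsPeriodicPt f (n * #A ^ 2).factorial y := by
  classical
  by_contra! h
  have hAper : ∀ y ∈ A, ∀ p, 0 < p → p < n * #A ^ 2 → ¬ IsPeriodicPt f p y :=
    fun y hy p hp hpL hper => h y hy (hper.trans_dvd (Nat.dvd_factorial hp hpL.le))
  obtain ⟨G, hG, hGdisj⟩ := exists_pairwiseDisjoint_image_iterate f.injective hA n hAper
  have hB : (G.biUnion fun j => A.image (⇑f)^[j] : Set X).encard = (#A * n : ℕ) := by
    rw [Set.encard_coe_eq_coe_finsetCard, card_biUnion hGdisj,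
      sum_congr rfl fun j _ => card_image_of_injective A (f.injective.iterate j), sum_const, hG,
      smul_eq_mul, mul_comm]
  have hcliques : ∀ j ∈ G, DynClique f δ (hiter f j '' A) := fun j _ => hAδ.image j
  have hcover : (G.biUnion fun j => A.image (⇑f)^[j] : Set X) ⊆ ⋃ j ∈ G, hiter f j '' A := by
    simp [hiter_natCast]
  exact (hf.lt_card_of_subset_biUnion G hcliques hB hcover).ne' hG

lemma eventually_forall_dist_hiter_le {f : X ≃ₜ X} {Q : ℕ} (hQ : 0 < Q) {ι : Type*} {l : Filter ι}
    {w : ι → X} {x : X} (hw : ∀ i, IsPeriodicPt f Q (w i)) (hx : IsPeriodicPt f Q x)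
    (hlim : Tendsto w l (𝓝 x)) {r : ℝ} (hr : 0 < r) :
    ∀ᶠ i in l, ∀ k, dist (hiter f k (w i)) (hiter f k x) ≤ r := by
  have hnear : ∀ᶠ i in l, ∀ j ∈ range Q, dist ((⇑f)^[j] (w i)) ((⇑f)^[j] x) < r :=
    (eventually_all_finset _).2 fun j _ =>
      Metric.tendsto_nhds.1 (((f.continuous.iterate j).tendsto x).comp hlim) r hr
  filter_upwards [hnear] with i hi k
  rw [hiter_eq_iterate_emod f hQ (hw i), hiter_eq_iterate_emod f hQ hx]
  refine (hi _ (mem_range.2 ?_)).le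
  have := Int.emod_lt_of_pos k (by omega : (0 : ℤ) < Q)
  omega

lemma Set.infinite_iUnion_of_forall_dist_le {P : ℕ → Set X} (hP : ∀ m, (P m).Nontrivial)
    {ε : ℕ → ℝ} (hε : Tendsto ε atTop (𝓝 0)) (hPε : ∀ m, ∀ x ∈ P m, ∀ y ∈ P m, dist x y ≤ ε m) :
    (⋃ m, P m).Infinite := by
  intro hfin
  have hsmall : ∀ᶠ m in atTop, ∀ p ∈ (⋃ m, P m).offDiag, ε m < dist p.1 p.2 :=
    (eventually_all_finite hfin.offDiag).2 fun p hp =>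
      hε.eventually (eventually_lt_nhds (dist_pos.2 (Set.mem_offDiag.1 hp).2.2))
  obtain ⟨m, hm⟩ := hsmall.exists
  obtain ⟨x, hx, y, hy, hxy⟩ := hP m
  have hxyU : (x, y) ∈ (⋃ m, P m).offDiag :=
    Set.mem_offDiag.2 ⟨Set.mem_iUnion_of_mem m hx, Set.mem_iUnion_of_mem m hy, hxy⟩
  exact (hm _ hxyU).not_ge (hPε m x hx y hy)

lemma exists_infinite_dynClique [CompactSpace X] (f : X ≃ₜ X) {Q : ℕ} (hQ : 0 < Q)
    {ε : ℕ → ℝ} (hε : Tendsto ε atTop (𝓝 0)) {P : ℕ → Set X} (hP : ∀ m, (P m).Nontrivial)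
    (hPε : ∀ m, DynClique f (ε m) (P m)) (hPper : ∀ m, ∃ w ∈ P m, IsPeriodicPt f Q w)
    {δ : ℝ} (hδ : 0 < δ) : ∃ U : Set X, U.Infinite ∧ DynClique f δ U := by
  choose w hwP hw using hPper
  obtain ⟨x, -, φ, hφ, hlim⟩ := isCompact_univ.tendsto_subseq (x := w) fun m => Set.mem_univ _
  have hx : IsPeriodicPt f Q x :=
    (isClosed_fixedPoints (f.continuous.iterate Q)).mem_of_tendsto hlim
      (Eventually.of_forall fun m => hw (φ m))
  have hεφ : Tendsto (ε ∘ φ) atTop (𝓝 0) := hε.comp hφ.tendsto_atTop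
  obtain ⟨N, hN⟩ := eventually_atTop.1 <|
    (eventually_forall_dist_hiter_le hQ (fun m => hw (φ m)) hx hlim (by positivity : 0 < δ / 4)).and
      (hεφ.eventually (eventually_le_nhds (by positivity : 0 < δ / 4)))
  refine ⟨⋃ m, P (φ (m + N)), ?_, ?_⟩
  · exact Set.infinite_iUnion_of_forall_dist_le (fun m => hP _)
      (hεφ.comp (tendsto_add_atTop_nat N)) fun m x hx y hy => by simpa using hPε _ x hx y hy 0
  · have hclose : ∀ y ∈ ⋃ m, P (φ (m + N)), ∀ k, dist (hiter f k y) (hiter f k x) ≤ δ / 2 := by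
      simp only [Set.mem_iUnion]
      rintro y ⟨m, hy⟩ k
      obtain ⟨hwx, hε⟩ := hN (m + N) (by omega)
      calc dist (hiter f k y) (hiter f k x)
          ≤ dist (hiter f k y) (hiter f k (w (φ (m + N)))) + dist (hiter f k (w (φ (m + N))))
            (hiter f k x) := dist_triangle _ _ _
        _ ≤ δ / 4 + δ / 4 := add_le_add ((hPε _ y hy _ (hwP _) k).trans hε) (hwx k)
        _ = δ / 2 := by ring
    simpa [mul_div_cancel₀] using DynClique.of_forall_dist_le hclose

theorem stmt6 [CompactSpace X] (f : X ≃ₜ X) (a n : ℕ) (ha : 2 ≤ a) (hn : 2 ≤ n)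
    (hf : MNExpansive f (a * n) n) : MNExpansive f a 1 := by
  obtain ⟨δ, hδ, hf⟩ := hf
  by_contra hnot
  have hscale : ∀ m : ℕ, ∃ A : Finset X, #A = a ∧ DynClique f (δ / (m + 1)) A :=
    fun m => exists_dynClique_of_not_mnExpansive hnot (by positivity)
  choose A hAcard hA using hscale
  have hA_one_lt : ∀ m, 1 < #(A m) := fun m => by rw [hAcard m]; omega
  have hAper : ∀ m, ∃ w ∈ (A m : Set X), IsPeriodicPt f (n * a ^ 2).factorial w := by
    intro m
    have hAδ : DynClique f δ (A m) := (hA m).mono (div_le_self hδ.le (by linarith))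
    have hA_pos : (A m).Nonempty := card_pos.1 (one_pos.trans (hA_one_lt m))
    have := (hAcard m ▸ hf).exists_isPeriodicPt_of_dynClique hA_pos hAδ
    rwa [hAcard m] at this
  have hε : Tendsto (fun m : ℕ => δ / (m + 1)) atTop (𝓝 0) := by
    simpa [div_eq_mul_inv] using tendsto_one_div_add_atTop_nhds_zero_nat.const_mul δ
  obtain ⟨U, hUinf, hU⟩ := exists_infinite_dynClique f (Nat.factorial_pos _) hε
    (fun m => by simpa using one_lt_card_iff_nontrivial.1 (hA_one_lt m)) hA hAper hδ
  exact hUinf (hf.finite_of_dynClique (by omega) hU)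
end

section
/- If f : X → X is a (3,2)-expansive homeomorphism of a compact metric space and x, y ∈ X are bi-asymptotic distinct points (dist(f^k(x), f^k(y)) → 0 as k → ±∞), then x and y are isolated points of X. -/
variable {X : Type*} [MetricSpace X]

open Filter Topology

lemma continuous_hiter (f : X ≃ₜ X) (k : ℤ) : Continuous (hiter f k) := by
  unfold hiter
  induction k using Int.induction_on with
  | zero => simpa using continuous_id
  | succ n ih =>
    rw [zpow_add, zpow_one, Equiv.Perm.coe_mul]
    exact ih.comp f.continuous
  | pred n ih =>
    rw [zpow_sub, zpow_one, Equiv.Perm.coe_mul]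
    exact ih.comp f.symm.continuous

lemma injective_hiter (f : X ≃ₜ X) (k : ℤ) : Function.Injective (hiter f k) :=
  (f.toEquiv ^ k).injective

/-- The only candidate for a separated subset of full size is `S` itself. -/
lemma dCard_le_of_dist_le {δ : ℝ} {S : Set X} {n : ℕ} (hS : S.encard = n + 1) {a b : X}
    (ha : a ∈ S) (hb : b ∈ S) (hab : a ≠ b) (hd : dist a b ≤ δ) : dCard δ S ≤ n := by
  refine iSup₂_le fun B ⟨hBS, hsep⟩ => ?_
  by_contra! hB
  have hSfin : S.Finite := Set.finite_of_encard_eq_coe (k := n + 1) (by exact_mod_cast hS)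
  have hBS : B = S :=
    (hSfin.subset hBS).eq_of_subset_of_encard_le hBS (hS ▸ Order.add_one_le_of_lt hB)
  subst hBS
  exact (hsep a ha b hb hab).not_ge hd

lemma MNExpansiveWith.exists_dist_gt {f : X ≃ₜ X} {δ : ℝ} (hexp : MNExpansiveWith f 3 2 δ)
    {x y z : X} (hxy : x ≠ y) (hxz : x ≠ z) (hyz : y ≠ z) :
    ∃ k, δ < dist (hiter f k x) (hiter f k y) ∧ δ < dist (hiter f k x) (hiter f k z) ∧
      δ < dist (hiter f k y) (hiter f k z) := by
  have hA : ({x, y, z} : Set X).encard = 3 :=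
    Set.encard_eq_three.mpr ⟨x, y, z, hxy, hxz, hyz, rfl⟩
  obtain ⟨k, hk⟩ := hexp {x, y, z} hA
  have hinj := injective_hiter f k
  have hS : (hiter f k '' {x, y, z}).encard = 2 + 1 := by
    rw [hinj.encard_image, hA]; rfl
  refine ⟨k, ?_, ?_, ?_⟩ <;> by_contra! hd <;>
    exact hk.not_ge (dCard_le_of_dist_le hS (by simp) (by simp) (hinj.ne ‹_›) hd)

/-- Outside a finite window of times the orbits of `x` and `y` are `δ`-close, and inside it
every point near enough to `x` shadows `x`: so a third point near `x` contradicts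
expansiveness. -/
lemma MNExpansiveWith.isOpen_singleton {f : X ≃ₜ X} {δ : ℝ} (hδ : 0 < δ)
    (hexp : MNExpansiveWith f 3 2 δ) {x y : X} (hxy : x ≠ y)
    (h1 : Tendsto (fun k : ℤ => dist (hiter f k x) (hiter f k y)) atTop (𝓝 0))
    (h2 : Tendsto (fun k : ℤ => dist (hiter f k x) (hiter f k y)) atBot (𝓝 0)) :
    IsOpen ({x} : Set X) := by
  obtain ⟨N₁, hN₁⟩ := (h1.eventually_le_const hδ).exists_forall_of_atTop
  obtain ⟨N₂, hN₂⟩ := (h2.eventually_le_const hδ).exists_forall_of_atBot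
  have hshadow : ⋂ k ∈ Finset.Icc N₂ N₁, hiter f k ⁻¹' Metric.closedBall (hiter f k x) δ ∈ 𝓝 x :=
    (biInter_finset_mem _).mpr fun k _ => (continuous_hiter f k).continuousAt.preimage_mem_nhds
      (Metric.closedBall_mem_nhds _ hδ)
  simp only [isOpen_iff_mem_nhds, Set.mem_singleton_iff, forall_eq]
  refine mem_of_superset (inter_mem hshadow (Metric.ball_mem_nhds x (dist_pos.mpr hxy)))
    fun z ⟨hzx, hzy⟩ => ?_
  by_contra hz
  have hyz : y ≠ z := by rintro rfl; simp [dist_comm] at hzy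
  obtain ⟨k, hxyk, hxzk, -⟩ := hexp.exists_dist_gt hxy (Ne.symm hz) hyz
  by_cases hk : k ∈ Finset.Icc N₂ N₁
  · exact (Set.mem_iInter₂.mp hzx k hk).not_gt (dist_comm (hiter f k x) _ ▸ hxzk)
  · rw [Finset.mem_Icc, not_and_or, not_le, not_le] at hk
    rcases hk with hk | hk
    · exact (hN₂ k hk.le).not_gt hxyk
    · exact (hN₁ k hk.le).not_gt hxyk

theorem stmt17_general (f : X ≃ₜ X) (hf : MNExpansive f 3 2) (x y : X)
    (hxy : x ≠ y)
    (h1 : Filter.Tendsto (fun k : ℤ => dist (hiter f k x) (hiter f k y))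
      Filter.atTop (nhds 0))
    (h2 : Filter.Tendsto (fun k : ℤ => dist (hiter f k x) (hiter f k y))
      Filter.atBot (nhds 0)) :
    nhdsWithin x {x}ᶜ = ⊥ ∧ nhdsWithin y {y}ᶜ = ⊥ := by
  obtain ⟨δ, hδ, hexp⟩ := hf
  simp only [← isOpen_singleton_iff_punctured_nhds]
  exact ⟨hexp.isOpen_singleton hδ hxy h1 h2, hexp.isOpen_singleton hδ hxy.symm
    (by simpa only [dist_comm] using h1) (by simpa only [dist_comm] using h2)⟩

theorem stmt17 [CompactSpace X] (f : X ≃ₜ X) (hf : MNExpansive f 3 2) (x y : X)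
    (hxy : x ≠ y)
    (h1 : Filter.Tendsto (fun k : ℤ => dist (hiter f k x) (hiter f k y))
      Filter.atTop (nhds 0))
    (h2 : Filter.Tendsto (fun k : ℤ => dist (hiter f k x) (hiter f k y))
      Filter.atBot (nhds 0)) :
    nhdsWithin x {x}ᶜ = ⊥ ∧ nhdsWithin y {y}ᶜ = ⊥ :=
  stmt17_general f hf x y hxy h1 h2
end
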